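/- arXiv:math/0605644 — 3 statements merged into one kernel-verified Lean document; each statement's English description precedes it below -/
import Mathlib

section
/- Let B ⊆ ℝ be an additive semigroup (closed under addition) such that for every ε > 0 it contains two distinct elements whose difference has absolute value at most ε. Then for any real M ≠ 0 the set B + ℤM = {b + nM : b ∈ B, n ∈ ℤ} is dense in ℝ. -/
lemma nsmul_mem_aux (B : Set ℝ) (hadd : ∀ x ∈ B, ∀ y ∈ B, x + y ∈ B)
    {w : ℝ} (hw : w ∈ B) : ∀ n : ℕ, ((n + 1 : ℕ) : ℝ) * w ∈ B := by
  intro n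
  induction n with
  | zero => simpa using hw
  | succ k ih =>
      have h2 : ((k + 1 + 1 : ℕ) : ℝ) * w = ((k + 1 : ℕ) : ℝ) * w + w := by
        push_cast; ring
      rw [h2]
      exact hadd _ ih _ hw

lemma combo_mem (B : Set ℝ) (hadd : ∀ x ∈ B, ∀ y ∈ B, x + y ∈ B)
    {u v : ℝ} (hu : u ∈ B) (hv : v ∈ B) :
    ∀ a b : ℕ, 0 < a + b → (a : ℝ) * u + (b : ℝ) * v ∈ B := by
  intro a b hab
  match a, b with
  | 0, 0 => omega
  | 0, b + 1 => simpa using nsmul_mem_aux B hadd hv b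
  | a + 1, 0 => simpa using nsmul_mem_aux B hadd hu a
  | a + 1, b + 1 =>
      exact hadd _ (nsmul_mem_aux B hadd hu a) _ (nsmul_mem_aux B hadd hv b)

/-- If `B ⊆ ℝ` is a nonempty additive semigroup containing, for every `ε > 0`, two
distinct elements at distance at most `ε`, then for every `M ≠ 0` the set
`B + ℤM` is dense in `ℝ`. -/
theorem dense_semigroup_plus_intMultiples (B : Set ℝ) (hne : B.Nonempty)
    (hadd : ∀ x ∈ B, ∀ y ∈ B, x + y ∈ B)
    (hclose : ∀ ε : ℝ, 0 < ε → ∃ x ∈ B, ∃ y ∈ B, x ≠ y ∧ |x - y| ≤ ε)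
    (M : ℝ) (hM : M ≠ 0) :
    Dense {z : ℝ | ∃ b ∈ B, ∃ n : ℤ, z = b + n * M} := by
  rw [Metric.dense_iff]
  intro z ε hε
  obtain ⟨x, hx, y, hy, hxy, hxyε⟩ := hclose (ε / 2) (by linarith)
  set d : ℝ := |x - y| with hd_def
  have hd : 0 < d := abs_pos.mpr (sub_ne_zero.mpr hxy)
  have hdε : d ≤ ε / 2 := hxyε
  set u : ℝ := max x y
  set v : ℝ := min x y
  have hu : u ∈ B := by
    show x ⊔ y ∈ B
    rcases max_cases x y with ⟨h, _⟩ | ⟨h, _⟩ <;> rw [h] <;> assumption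
  have hv : v ∈ B := by
    show x ⊓ y ∈ B
    rcases min_cases x y with ⟨h, _⟩ | ⟨h, _⟩ <;> rw [h] <;> assumption
  have huv : u - v = d := by
    rw [hd_def, abs_sub_comm]; exact max_sub_min_eq_abs x y
  set m : ℝ := |M| with hm_def
  have hm : 0 < m := abs_pos.mpr hM
  -- choose N with m ≤ N * d
  set N : ℕ := max 1 ⌈m / d⌉₊ with hN_def
  have hN1 : 1 ≤ N := le_max_left _ _
  have hNd : m ≤ (N : ℝ) * d := by
    have h1 : m / d ≤ (⌈m / d⌉₊ : ℝ) := Nat.le_ceil _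
    have h2 : (⌈m / d⌉₊ : ℝ) ≤ (N : ℝ) := by exact_mod_cast Nat.cast_le.mpr (le_max_right _ _)
    calc m = (m / d) * d := by field_simp
    _ ≤ (N : ℝ) * d := by nlinarith
  -- choose n
  set w : ℝ := z - (N : ℝ) * u with hw_def
  set n : ℤ := ⌈w / m⌉ with hn_def
  set r : ℝ := (n : ℝ) * m - w with hr_def
  have hw' : w / m * m = w := div_mul_cancel₀ w hm.ne'
  have hr0 : 0 ≤ r := by
    have h1 := mul_le_mul_of_nonneg_right (Int.le_ceil (w / m)) hm.le
    rw [hw'] at h1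
    rw [hr_def]; linarith
  have hrm : r < m := by
    have h1 := mul_lt_mul_of_pos_right (Int.ceil_lt_add_one (w / m)) hm
    rw [add_mul, one_mul, hw'] at h1
    rw [hr_def]; linarith
  -- choose k
  set k : ℕ := ⌊r / d⌋₊ with hk_def
  have hkd : (k : ℝ) * d ≤ r := by
    have h1 := mul_le_mul_of_nonneg_right (Nat.floor_le (div_nonneg hr0 hd.le)) hd.le
    rwa [div_mul_cancel₀ r hd.ne'] at h1
  have hrk : r < ((k : ℝ) + 1) * d := by
    have := (div_lt_iff₀ hd).mp (Nat.lt_floor_add_one (r / d))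
    rw [hk_def]; push_cast; linarith
  have hkN : k ≤ N := by
    have : (k : ℝ) * d < (N : ℝ) * d := lt_of_le_of_lt hkd (lt_of_lt_of_le hrm hNd)
    have h2 : (k : ℝ) ≤ (N : ℝ) := by nlinarith
    exact_mod_cast h2
  -- the element of B
  have hb : (N : ℝ) * u - (k : ℝ) * d ∈ B := by
    have hpos : 0 < (N - k) + k := by omega
    have := combo_mem B hadd hu hv (N - k) k hpos
    have hcast : ((N - k : ℕ) : ℝ) = (N : ℝ) - (k : ℝ) := Nat.cast_sub hkN
    rw [hcast] at this
    have heq : ((N : ℝ) - (k : ℝ)) * u + (k : ℝ) * v = (N : ℝ) * u - (k : ℝ) * d := by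
      rw [← huv]; ring
    rwa [heq] at this
  -- the integer multiple
  have hsign : ∃ n' : ℤ, (n' : ℝ) * M = (n : ℝ) * m := by
    rcases abs_cases M with ⟨h, _⟩ | ⟨h, _⟩
    · exact ⟨n, by rw [hm_def, h]⟩
    · exact ⟨-n, by rw [hm_def, h]; push_cast; ring⟩
  obtain ⟨n', hn'⟩ := hsign
  refine ⟨(N : ℝ) * u - (k : ℝ) * d + (n' : ℝ) * M, ?_, ?_⟩
  · rw [Metric.mem_ball, Real.dist_eq]
    have heq : (N : ℝ) * u - (k : ℝ) * d + (n' : ℝ) * M - z = r - (k : ℝ) * d := by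
      rw [hn', hr_def, hw_def]; ring
    rw [heq, abs_of_nonneg (by linarith)]
    nlinarith
  · exact ⟨_, hb, n', rfl⟩
end

section
/- Let ψ be a holomorphic injective map from a domain U ⊆ ℂ onto a domain in ℂ. Suppose A ⊆ U is a nondegenerate line segment, ψ maps A into a line, and |ψ'| is constant along A. Then ψ is the restriction of a complex affine map z ↦ az + b. -/
/-!
Along the segment `t ↦ z₀ + t v`, the curve `ψ(z₀ + t v)` stays on the line `w₀ + ℝ w`, so the
velocity `ψ'(z₀ + t v) v` is a real multiple of `w`. The real number `ψ'(z₀ + t v) v / w` has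
constant absolute value and depends continuously on `t`, hence it is constant. Thus `ψ'` is
constant on a set accumulating inside the domain, so by the identity theorem it is constant on
the domain, and `ψ` is affine there; injectivity rules out the constant case.
-/

open Set Filter Topology

lemma hasDerivAt_add_ofReal_mul (z₀ v : ℂ) (t : ℝ) :
    HasDerivAt (fun s : ℝ => z₀ + s * v) v t := by
  simpa using ((Complex.ofRealCLM.hasDerivAt (x := t)).mul_const v).const_add z₀

lemma continuous_add_ofReal_mul (z₀ v : ℂ) : Continuous fun s : ℝ => z₀ + s * v := by
  fun_prop

lemma injective_add_ofReal_mul (z₀ : ℂ) {v : ℂ} (hv : v ≠ 0) :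
    Function.Injective fun s : ℝ => z₀ + s * v := by
  intro s s' h
  simpa [hv] using h

lemma frequently_nhdsNE_of_eventually_nhds_line {p : ℂ → Prop} {z₀ v : ℂ} (hv : v ≠ 0)
    {t : ℝ} (h : ∀ᶠ s : ℝ in 𝓝 t, p (z₀ + s * v)) : ∃ᶠ z in 𝓝[≠] (z₀ + t * v), p z := by
  have hL : Tendsto (fun s : ℝ => z₀ + s * v) (𝓝[≠] t) (𝓝[≠] (z₀ + t * v)) :=
    (continuous_add_ofReal_mul z₀ v).continuousWithinAt.tendsto_nhdsWithin
      fun _ hs => (injective_add_ofReal_mul z₀ hv).ne hs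
  exact hL.frequently (h.filter_mono nhdsWithin_le_nhds).frequently

lemma im_div_eq_zero_of_hasDerivAt_of_eventually_mem_line {γ : ℝ → ℂ} {γ' w₀ w : ℂ} {t : ℝ}
    (hγ : HasDerivAt γ γ' t) (hline : ∀ᶠ s in 𝓝 t, ∃ r : ℝ, γ s = w₀ + r * w) :
    (γ' / w).im = 0 := by
  obtain rfl | hw := eq_or_ne w 0
  · simp
  have hder : HasDerivAt (fun s => ((γ s - w₀) / w).im) (γ' / w).im t :=
    Complex.imCLM.hasFDerivAt.comp_hasDerivAt t ((hγ.sub_const w₀).div_const w)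
  have hzero : (fun s => ((γ s - w₀) / w).im) =ᶠ[𝓝 t] fun _ => 0 := by
    filter_upwards [hline] with s ⟨r, hr⟩
    simp [hr, hw]
  exact hder.unique ((hasDerivAt_const t 0).congr_of_eventuallyEq hzero)

lemma IsPreconnected.eq_of_im_eq_zero_of_norm_eq {X : Type*} [TopologicalSpace X] {S : Set X}
    (hS : IsPreconnected S) {f : X → ℂ} {r : ℝ} (hf : ContinuousOn f S)
    (him : ∀ x ∈ S, (f x).im = 0) (hnorm : ∀ x ∈ S, ‖f x‖ = r) {x y : X} (hx : x ∈ S)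
    (hy : y ∈ S) : f x = f y := by
  refine hS.constant_of_mapsTo (T := {(r : ℂ), -(r : ℂ)}) (toFinite _).isDiscrete hf
    (fun x hx => ?_) hx hy
  have hre : f x = (f x).re := Complex.ext rfl (by simp [him x hx])
  have habs : |(f x).re| = r := (Complex.abs_re_eq_norm.2 (him x hx)).trans (hnorm x hx)
  rcases abs_choice (f x).re with h | h
  · left; rw [hre, ← habs, h]
  · right; rw [hre, ← habs, h]; simp

lemma deriv_eq_of_mapsTo_line_of_norm_deriv_eq {ψ : ℂ → ℂ} {z₀ v w₀ w : ℂ} {c : ℝ}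
    {I : Set ℝ} (hv : v ≠ 0) (hw : w ≠ 0) (hIo : IsOpen I) (hIc : IsPreconnected I)
    (hψ : ∀ t ∈ I, AnalyticAt ℂ ψ (z₀ + t * v))
    (hline : ∀ t ∈ I, ∃ r : ℝ, ψ (z₀ + t * v) = w₀ + r * w)
    (hc : ∀ t ∈ I, ‖deriv ψ (z₀ + t * v)‖ = c) {s t : ℝ} (hs : s ∈ I) (ht : t ∈ I) :
    deriv ψ (z₀ + s * v) = deriv ψ (z₀ + t * v) := by
  set g : ℝ → ℂ := fun t => deriv ψ (z₀ + t * v) * v / w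
  have hg_cont : ContinuousOn g I := fun t ht =>
    have hderiv_cont : ContinuousAt (fun s : ℝ => deriv ψ (z₀ + s * v)) t :=
      (hψ t ht).deriv.continuousAt.comp_of_eq (continuous_add_ofReal_mul z₀ v).continuousAt rfl
    ((hderiv_cont.mul_const v).div_const w).continuousWithinAt
  have hg_im : ∀ t ∈ I, (g t).im = 0 := fun t ht =>
    im_div_eq_zero_of_hasDerivAt_of_eventually_mem_line
      ((hψ t ht).differentiableAt.hasDerivAt.comp t (hasDerivAt_add_ofReal_mul z₀ v t))
      (eventually_of_mem (hIo.mem_nhds ht) hline)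
  have hg_norm : ∀ t ∈ I, ‖g t‖ = c * ‖v‖ / ‖w‖ := fun t ht => by simp [g, hc t ht]
  simpa [g, hv, hw] using hIc.eq_of_im_eq_zero_of_norm_eq hg_cont hg_im hg_norm hs ht

lemma ne_zero_of_injOn_mul_add {R : Type*} [Semiring R] {s : Set R} {a b : R}
    (h : InjOn (fun z => a * z + b) s) (hs : s.Nontrivial) : a ≠ 0 := by
  rintro rfl
  obtain ⟨x, hx, y, hy, hxy⟩ := hs
  exact hxy (h hx hy (by simp))

/-- A conformal (holomorphic injective) map of a domain `U ⊆ ℂ` that sends a nondegenerate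
line segment `A ⊆ U` into a line and whose derivative has constant modulus along `A`
is the restriction of a complex affine map `z ↦ a z + b`. -/
theorem conformal_affine_of_line_and_const_modulus
    (U : Set ℂ) (hUo : IsOpen U) (hUc : IsConnected U)
    (ψ : ℂ → ℂ) (hψ : ∀ z ∈ U, DifferentiableAt ℂ ψ z) (hinj : Set.InjOn ψ U)
    (z₀ v : ℂ) (hv : v ≠ 0) (t₀ t₁ : ℝ) (ht : t₀ < t₁)
    (A : Set ℂ) (hA : A = (fun t : ℝ => z₀ + (t : ℂ) * v) '' Set.Icc t₀ t₁)
    (hAU : A ⊆ U)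
    (w₀ w : ℂ) (hw : w ≠ 0)
    (hline : ∀ z ∈ A, ∃ t : ℝ, ψ z = w₀ + (t : ℂ) * w)
    (c : ℝ) (hc : ∀ z ∈ A, ‖deriv ψ z‖ = c) :
    ∃ a b : ℂ, a ≠ 0 ∧ ∀ z ∈ U, ψ z = a * z + b := by
  set L : ℝ → ℂ := fun t => z₀ + t * v
  have hLA : MapsTo L (Ioo t₀ t₁) A := hA ▸ (mapsTo_image L _).mono_left Ioo_subset_Icc_self
  have hψU : AnalyticOnNhd ℂ ψ U :=
    DifferentiableOn.analyticOnNhd (fun z hz => (hψ z hz).differentiableWithinAt) hUo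
  obtain ⟨tm, htm⟩ := nonempty_Ioo.2 ht
  have hderiv_segment : ∀ t ∈ Ioo t₀ t₁, deriv ψ (L t) = deriv ψ (L tm) := fun t ht =>
    deriv_eq_of_mapsTo_line_of_norm_deriv_eq hv hw isOpen_Ioo isPreconnected_Ioo
      (fun t ht => hψU _ (hAU (hLA ht))) (fun t ht => hline _ (hLA ht))
      (fun t ht => hc _ (hLA ht)) ht htm
  have hderiv : EqOn (deriv ψ) (fun _ => deriv ψ (L tm)) U :=
    hψU.deriv.eqOn_of_preconnected_of_frequently_eq analyticOnNhd_const hUc.isPreconnected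
      (hAU (hLA htm)) (frequently_nhdsNE_of_eventually_nhds_line hv
        (eventually_of_mem (isOpen_Ioo.mem_nhds htm) hderiv_segment))
  obtain ⟨b, hb⟩ := hUo.exists_eq_add_of_deriv_eq hUc.isPreconnected hψU.differentiableOn
    (differentiableOn_id.const_mul (deriv ψ (L tm))) fun z hz => by simp [hderiv hz]
  have hU_nontrivial : U.Nontrivial := ((Ioo_infinite ht).nontrivial.image
    (injective_add_ofReal_mul z₀ hv)).mono (hLA.image_subset.trans hAU)
  exact ⟨_, b, ne_zero_of_injOn_mul_add (hinj.congr hb) hU_nontrivial, hb⟩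
end

section
/- Let f be a rational function of degree ≥ 2 and a a fixed point of f that is not branch-exceptional. Then there exists j₀ such that for all j ≥ j₀, the point q_{−j} of any fixed nonperiodic backward orbit (q₀ = a, q₀ = f(q_{−1}), …) avoiding critical points is not a postcritical point of f. -/
open Filter Topology

private lemma wronskian_ne_zero {P Q : Polynomial ℂ} (hcop : IsCoprime P Q)
    (hdeg : 2 ≤ max P.natDegree Q.natDegree) :
    P.derivative * Q - P * Q.derivative ≠ 0 := by
  intro h
  have hPQ : P.derivative * Q = P * Q.derivative := by linear_combination h
  have hP0 : P ≠ 0 := by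
    rintro rfl
    have := (isCoprime_zero_left.mp hcop)
    have h1 : Q.natDegree = 0 := Polynomial.natDegree_eq_zero_of_isUnit this
    simp [h1] at hdeg
  have hQ0 : Q ≠ 0 := by
    rintro rfl
    have := (isCoprime_zero_right.mp hcop)
    have h1 : P.natDegree = 0 := Polynomial.natDegree_eq_zero_of_isUnit this
    simp [h1] at hdeg
  have hPdvd : P ∣ P.derivative := by
    have : P ∣ P.derivative * Q := ⟨Q.derivative, hPQ⟩
    exact hcop.dvd_of_dvd_mul_right this
  have hQdvd : Q ∣ Q.derivative := by
    have : Q ∣ Q.derivative * P := by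
      rw [mul_comm, ← hPQ]; exact Dvd.intro_left _ rfl
    exact hcop.symm.dvd_of_dvd_mul_right this
  have hPd : P.derivative = 0 := by
    by_contra hne
    have hdn : P.natDegree ≠ 0 := by
      intro h0
      exact hne (by
        rw [Polynomial.eq_C_of_natDegree_eq_zero h0]; simp)
    have h1 := Polynomial.natDegree_derivative_lt hdn
    have h2 := Polynomial.natDegree_le_of_dvd hPdvd hne
    omega
  have hQd : Q.derivative = 0 := by
    by_contra hne
    have hdn : Q.natDegree ≠ 0 := by
      intro h0
      exact hne (by
        rw [Polynomial.eq_C_of_natDegree_eq_zero h0]; simp)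
    have h1 := Polynomial.natDegree_derivative_lt hdn
    have h2 := Polynomial.natDegree_le_of_dvd hQdvd hne
    omega
  have h1 : P.natDegree = 0 := Polynomial.natDegree_eq_zero_of_derivative_eq_zero hPd
  have h2 : Q.natDegree = 0 := Polynomial.natDegree_eq_zero_of_derivative_eq_zero hQd
  simp [h1, h2] at hdeg

/-- Let `f` be a rational map of degree `≥ 2` (modelled on `OnePoint ℂ` as the continuous
extension of `P/Q`, `P, Q` coprime), `a` a fixed point of `f`, and `q` a nonperiodic
backward orbit of `a` avoiding the critical points of `f` (the points where `f` is not
locally injective) — witnessing that `a` is not branch-exceptional. Then there exists `j₀`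
such that for all `j ≥ j₀` the point `q j` is not postcritical (does not belong to the
forward orbit of any critical point). -/
theorem backward_orbit_eventually_not_postcritical
    (P Q : Polynomial ℂ) (hcop : IsCoprime P Q)
    (hdeg : 2 ≤ max P.natDegree Q.natDegree)
    (f : OnePoint ℂ → OnePoint ℂ) (hfc : Continuous f)
    (hf : ∀ z : ℂ, Q.eval z ≠ 0 →
      f (z : OnePoint ℂ) = ((P.eval z / Q.eval z : ℂ) : OnePoint ℂ))
    (a : ℂ) (hfix : f (a : OnePoint ℂ) = (a : OnePoint ℂ))
    (q : ℕ → OnePoint ℂ) (hq0 : q 0 = (a : OnePoint ℂ))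
    (hq : ∀ j, f (q (j + 1)) = q j)
    (hnp : ∃ j, q j ≠ (a : OnePoint ℂ))
    (hnc : ∀ j, ∃ U ∈ 𝓝 (q j), Set.InjOn f U) :
    ∃ j₀ : ℕ, ∀ j ≥ j₀,
      ¬ ∃ c : OnePoint ℂ, (¬ ∃ U ∈ 𝓝 c, Set.InjOn f U) ∧
        ∃ n : ℕ, 1 ≤ n ∧ f^[n] c = q j := by
  classical
  set W : Polynomial ℂ := P.derivative * Q - P * Q.derivative with hWdef
  have hW : W ≠ 0 := wronskian_ne_zero hcop hdeg
  -- basic iteration facts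
  have ha : ∀ m : ℕ, f^[m] (a : OnePoint ℂ) = (a : OnePoint ℂ) := by
    intro m; induction m with
    | zero => rfl
    | succ m ih => rw [Function.iterate_succ_apply, hfix, ih]
  have hiter : ∀ m i : ℕ, f^[m] (q (i + m)) = q i := by
    intro m
    induction m with
    | zero => intro i; rfl
    | succ m ih =>
      intro i
      have : f (q (i + m + 1)) = q (i + m) := hq (i + m)
      calc f^[m+1] (q (i + (m+1))) = f^[m] (f (q (i + m + 1))) := by
            rw [Function.iterate_succ_apply]; ring_nf
        _ = q i := by rw [this, ih i]
  -- periodic point mapped to the fixed point must be the fixed point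
  have hper : ∀ (x : OnePoint ℂ) (p j : ℕ), 1 ≤ p → f^[p] x = x →
      f^[j] x = (a : OnePoint ℂ) → x = (a : OnePoint ℂ) := by
    intro x p j hp hpx hjx
    have hmul : ∀ N : ℕ, f^[N * p] x = x := by
      intro N; induction N with
      | zero => simp
      | succ N ih =>
        have : (N + 1) * p = p + N * p := by ring
        rw [this, Function.iterate_add_apply, ih, hpx]
    have hle : j ≤ j * p := Nat.le_mul_of_pos_right j hp
    calc x = f^[j * p] x := (hmul j).symm
      _ = f^[j * p - j] (f^[j] x) := by
          rw [← Function.iterate_add_apply]; congr 1; omega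
      _ = (a : OnePoint ℂ) := by rw [hjx, ha]
  -- tail: q j ≠ a for j ≥ J
  obtain ⟨J, hJ⟩ := hnp
  have htail : ∀ i, J ≤ i → q i ≠ (a : OnePoint ℂ) := by
    intro i hi hqa
    apply hJ
    have := hiter (i - J) J
    rw [show J + (i - J) = i by omega, hqa, ha] at this
    exact this.symm
  -- the critical set is contained in a finite set B
  set B : Set (OnePoint ℂ) :=
    insert (OnePoint.infty : OnePoint ℂ)
      ((fun z : ℂ => (z : OnePoint ℂ)) '' ({z : ℂ | Q.IsRoot z} ∪ {z : ℂ | W.IsRoot z})) with hBdef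
  have hQne : Q ≠ 0 := by
    rintro rfl
    have := (isCoprime_zero_right.mp hcop)
    have h1 : P.natDegree = 0 := Polynomial.natDegree_eq_zero_of_isUnit this
    simp [h1] at hdeg
  have hBfin : B.Finite := by
    apply Set.Finite.insert
    exact ((Polynomial.finite_setOf_isRoot hQne).union
      (Polynomial.finite_setOf_isRoot hW)).image _
  have hcrit : ∀ c : OnePoint ℂ, c ∉ B → ∃ U ∈ 𝓝 c, Set.InjOn f U := by
    intro c hcB
    -- c is a finite point, not a root of Q or W
    obtain ⟨z, rfl⟩ : ∃ z : ℂ, c = (z : OnePoint ℂ) := by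
      cases c with
      | infty => exact absurd (Set.mem_insert _ _) hcB
      | coe z => exact ⟨z, rfl⟩
    have hQz : Q.eval z ≠ 0 := fun h => hcB (Set.mem_insert_of_mem _ ⟨z, Or.inl h, rfl⟩)
    have hWz : W.eval z ≠ 0 := fun h => hcB (Set.mem_insert_of_mem _ ⟨z, Or.inr h, rfl⟩)
    -- local injectivity via the inverse function theorem
    have hg : HasStrictDerivAt (fun w => P.eval w / Q.eval w)
        ((P.derivative.eval z * Q.eval z - P.eval z * Q.derivative.eval z) / Q.eval z ^ 2) z :=
      (P.hasStrictDerivAt z).div (Q.hasStrictDerivAt z) hQz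
    have hd0 : (P.derivative.eval z * Q.eval z - P.eval z * Q.derivative.eval z)
        / Q.eval z ^ 2 ≠ 0 := by
      apply div_ne_zero _ (pow_ne_zero _ hQz)
      intro h
      apply hWz
      simp [hWdef, Polynomial.eval_sub, Polynomial.eval_mul, h]
    have hFD := hg.hasStrictFDerivAt_equiv hd0
    set φ := hFD.toOpenPartialHomeomorph _ with hφ
    have hsrc : z ∈ φ.source := hFD.mem_toOpenPartialHomeomorph_source
    have hsrcopen : IsOpen φ.source := φ.open_source
    have hinj : Set.InjOn (fun w => P.eval w / Q.eval w) φ.source := by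
      have := φ.injOn
      rwa [hφ, HasStrictFDerivAt.toOpenPartialHomeomorph_coe] at this
    set V : Set ℂ := φ.source ∩ {w | Q.eval w ≠ 0} with hVdef
    have hVopen : IsOpen V :=
      hsrcopen.inter (isClosed_eq Q.continuous continuous_const).isOpen_compl
    have hzV : z ∈ V := ⟨hsrc, hQz⟩
    refine ⟨(fun w : ℂ => (w : OnePoint ℂ)) '' V, ?_, ?_⟩
    · exact (OnePoint.isOpenEmbedding_coe.isOpenMap _ hVopen).mem_nhds ⟨z, hzV, rfl⟩
    · rintro x ⟨w₁, hw₁, rfl⟩ y ⟨w₂, hw₂, rfl⟩ hxy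
      have h1 : f (w₁ : OnePoint ℂ) = ((P.eval w₁ / Q.eval w₁ : ℂ) : OnePoint ℂ) :=
        hf w₁ hw₁.2
      have h2 : f (w₂ : OnePoint ℂ) = ((P.eval w₂ / Q.eval w₂ : ℂ) : OnePoint ℂ) :=
        hf w₂ hw₂.2
      rw [h1, h2] at hxy
      have := hinj hw₁.1 hw₂.1 (OnePoint.coe_eq_coe.mp hxy)
      exact congrArg _ this
  -- main argument
  by_contra hcon
  push_neg at hcon
  choose j hj c hc n hn1 hfn using hcon
  -- pigeonhole: some critical value appears for arbitrarily large indices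
  have hcB : ∀ m, c m ∈ B := by
    intro m
    by_contra hmB
    obtain ⟨U, hU, hUinj⟩ := hcrit (c m) hmB
    exact hc m U hU hUinj
  haveI : Finite B := hBfin.to_subtype
  obtain ⟨b, hb⟩ := Finite.exists_infinite_fiber (fun m => (⟨c m, hcB m⟩ : B))
  have hbinf : {m | (⟨c m, hcB m⟩ : B) = b}.Infinite := by
    rw [← Set.infinite_coe_iff]
    exact hb
  obtain ⟨m₁, hm₁b, hm₁⟩ := hbinf.exists_gt J
  obtain ⟨m₂, hm₂b, hm₂⟩ := hbinf.exists_gt (j m₁ + n m₁)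
  have hcc : c m₁ = c m₂ := by
    have h1 : (⟨c m₁, hcB m₁⟩ : B) = b := hm₁b
    have h2 : (⟨c m₂, hcB m₂⟩ : B) = b := hm₂b
    have := h1.trans h2.symm
    exact congrArg Subtype.val this
  set j₁ := j m₁
  set j₂ := j m₂
  have hj₁ : m₁ ≤ j₁ := hj m₁
  have hj₂ : m₂ ≤ j₂ := hj m₂
  have hlt : j₁ + n m₁ < j₂ := lt_of_lt_of_le hm₂ hj₂
  -- f^[(j₂ - j₁) + n m₂] (c m₁) = q j₁
  have hD : f^[(j₂ - j₁) + n m₂] (c m₁) = q j₁ := by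
    rw [Function.iterate_add_apply, hcc, hfn m₂]
    have := hiter (j₂ - j₁) j₁
    rwa [show j₁ + (j₂ - j₁) = j₂ by omega] at this
  have hD1 : f^[n m₁] (c m₁) = q j₁ := hfn m₁
  set D := (j₂ - j₁) + n m₂
  have hDgt : n m₁ < D := by
    have := hn1 m₂
    omega
  have hperiod : f^[D - n m₁] (q j₁) = q j₁ := by
    conv_lhs => rw [← hD1]
    rw [← Function.iterate_add_apply, show D - n m₁ + n m₁ = D by omega, hD]
  have hqa : q j₁ = (a : OnePoint ℂ) := by
    apply hper (q j₁) (D - n m₁) j₁ (by omega) hperiod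
    have := hiter j₁ 0
    rw [Nat.zero_add] at this
    rw [this, hq0]
  exact htail j₁ (by omega) hqa
end
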